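/- arXiv:1405.0699 — 2 statements merged into one kernel-verified Lean document; each statement's English description precedes it below -/
import Mathlib

section
/- Let A be an abelian group with involution ι such that the norm N = 1 + ι : A → A⁺ := Fix(ι) is surjective. Set A⁻ := A/A⁺ and write ₂(A⁻) for its 2-torsion subgroup. Then there is a well-defined group homomorphism (1−ι)∘s : ₂(A⁻) → A⁺, independent of the choice of set-theoretic section s : A⁻ → A, and an exact sequence ₂(A⁻) → A⁺ → A/(1−ι)A → A⁻/2A⁻ → 0. -/
/-- For an abelian group `A` with involution `ι` whose norm `1 + ι` is
surjective onto the fixed subgroup `A⁺`, the map `x ↦ x - ι x` gives a well-defined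
homomorphism `₂(A⁻) → A⁺` (independent of the choice of section of `A → A⁻ = A/A⁺`),
and there is an exact sequence `₂(A⁻) → A⁺ → A/(1-ι)A → A⁻/2A⁻ → 0`.
Here `I` is the subgroup `(1-ι)A`, `twoA` is `2A`, so `A⁻/2A⁻ = A/(A⁺ ⊔ 2A)`. -/
theorem stmt_6 (A : Type*) [AddCommGroup A] (ι : A →+ A)
    (hinv : ∀ a, ι (ι a) = a)
    (Aplus : AddSubgroup A) (hAplus : ∀ a : A, a ∈ Aplus ↔ ι a = a)
    (hnorm : ∀ b ∈ Aplus, ∃ a : A, a + ι a = b)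
    (I : AddSubgroup A) (hI : ∀ x : A, x ∈ I ↔ ∃ c : A, x = c - ι c)
    (twoA : AddSubgroup A) (htwoA : ∀ x : A, x ∈ twoA ↔ ∃ c : A, x = 2 • c) :
    -- the map `x ↦ x - ι x` on 2-torsion classes of `A⁻ = A/A⁺` is independent of the
    -- chosen representative (hence of any set-theoretic section),
    (∀ x y : A, x - y ∈ Aplus → x - ι x = y - ι y) ∧
    -- it lands in `A⁺` on the 2-torsion subgroup `₂(A⁻)`,
    (∀ x : A, 2 • x ∈ Aplus → x - ι x ∈ Aplus) ∧
    -- and it is additive, hence a group homomorphism `₂(A⁻) → A⁺`;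
    (∀ x y : A, (x + y) - ι (x + y) = (x - ι x) + (y - ι y)) ∧
    -- exactness at `A⁺`: the kernel of `A⁺ → A/(1-ι)A` is the image of `₂(A⁻)`,
    (∀ b ∈ Aplus, (b ∈ I ↔ ∃ x : A, 2 • x ∈ Aplus ∧ b = x - ι x)) ∧
    -- the map `A/(1-ι)A → A⁻/2A⁻` is well defined,
    I ≤ Aplus ⊔ twoA ∧
    -- exactness at `A/(1-ι)A`: kernel of `A/(1-ι)A → A⁻/2A⁻` = image of `A⁺`,
    (∀ a : A, ((∃ b ∈ Aplus, a - b ∈ I) ↔ a ∈ Aplus ⊔ twoA)) ∧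
    -- exactness at `A⁻/2A⁻`: surjectivity.
    Function.Surjective (QuotientAddGroup.mk (s := Aplus ⊔ twoA)) := by
  refine ⟨?_, ?_, ?_, ?_, ?_, ?_, ?_⟩
  · intro x y h
    have h2 : ι (x - y) = x - y := (hAplus _).1 h
    rw [map_sub] at h2
    abel_nf
    abel_nf at h2
    linear_combination (norm := abel) -h2
  · intro x h
    have h2 : ι (2 • x) = 2 • x := (hAplus _).1 h
    rw [map_nsmul] at h2
    rw [hAplus, map_sub, hinv]
    rw [two_nsmul, two_nsmul] at h2
    linear_combination (norm := abel) h2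
  · intro x y; rw [map_add]; abel
  · intro b hb
    constructor
    · intro hbI
      obtain ⟨c, hc⟩ := (hI b).1 hbI
      refine ⟨c, ?_, hc⟩
      rw [hAplus, map_nsmul]
      have hb2 : ι b = b := (hAplus _).1 hb
      rw [hc, map_sub, hinv] at hb2
      have : (2:ℕ) • ι c = 2 • c := by rw [two_nsmul, two_nsmul]; linear_combination (norm := abel) hb2
      exact this
    · rintro ⟨x, -, hx⟩
      exact (hI b).2 ⟨x, hx⟩
  · intro z hz
    obtain ⟨c, hc⟩ := (hI z).1 hz
    have h1 : -(c + ι c) ∈ Aplus := by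
      apply neg_mem; rw [hAplus, map_add, hinv]; abel
    have h2 : (2:ℕ) • c ∈ twoA := (htwoA _).2 ⟨c, rfl⟩
    have : z = -(c + ι c) + 2 • c := by rw [hc, two_nsmul]; abel
    rw [this]
    exact add_mem (AddSubgroup.mem_sup_left h1) (AddSubgroup.mem_sup_right h2)
  · intro a
    constructor
    · rintro ⟨b, hb, hab⟩
      obtain ⟨c, hc⟩ := (hI _).1 hab
      have h1 : b + (-(c + ι c)) ∈ Aplus := by
        apply add_mem hb; apply neg_mem; rw [hAplus, map_add, hinv]; abel
      have h2 : (2:ℕ) • c ∈ twoA := (htwoA _).2 ⟨c, rfl⟩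
      have : a = (b + -(c + ι c)) + 2 • c := by
        rw [two_nsmul]; linear_combination (norm := abel) hc
      rw [this]
      exact add_mem (AddSubgroup.mem_sup_left h1) (AddSubgroup.mem_sup_right h2)
    · intro ha
      obtain ⟨p, hp, t, ht, hpt⟩ := (AddSubgroup.mem_sup).1 ha
      obtain ⟨c, hc⟩ := (htwoA t).1 ht
      refine ⟨p + (c + ι c), add_mem hp ?_, ?_⟩
      · rw [hAplus, map_add, hinv]; abel
      · refine (hI _).2 ⟨c, ?_⟩
        rw [← hpt, hc, two_nsmul]; abel
  · intro q
    exact Quotient.inductionOn q fun a => ⟨a, rfl⟩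
end

section
/- Let d > 1. The subgroups of C∞ × C_d that are infinite cyclic of index d are exactly the d subgroups generated by t·s^r for 0 ≤ r < d, where t generates C∞ and s generates C_d. Moreover, the automorphism group Aut(C∞ × C_d) acts transitively on this set of subgroups; in particular none of these subgroups is characteristic when d > 1. -/
/-!
The shear `(x, y) ↦ (x, y + x • c)` is an automorphism of `ℤ × A` carrying `⟨(1, r)⟩` to
`⟨(1, r + c)⟩`; this gives transitivity, and reduces the index of `⟨(1, r)⟩` to that of `ℤ × 0`,
namely `|A|`. More generally `⟨(a, b)⟩` has index `|a| · |A|`, so an infinite cyclic subgroup of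
index `|A|` is generated by some `(±1, b)`.
-/

open AddSubgroup

section

variable {A : Type*} [AddCommGroup A]

@[simps]
def shearAddAut (c : A) : AddAut (ℤ × A) where
  toFun p := (p.1, p.2 + p.1 • c)
  invFun p := (p.1, p.2 - p.1 • c)
  left_inv p := by simp
  right_inv p := by simp
  map_add' p q := by
    ext
    · rfl
    · simp only [Prod.snd_add, Prod.fst_add, add_zsmul]; abel

theorem map_shearAddAut_zmultiples_one (c r : A) :
    (zmultiples ((1 : ℤ), r)).map (shearAddAut c : ℤ × A →+ ℤ × A) =
      zmultiples ((1 : ℤ), r + c) := by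
  rw [AddMonoidHom.map_zmultiples]
  simp

theorem zmultiples_one_injective :
    Function.Injective fun r : A => zmultiples ((1 : ℤ), r) := by
  intro r r' h
  obtain ⟨n, hn⟩ : ((1 : ℤ), r') ∈ zmultiples ((1 : ℤ), r) := by
    simp only at h; rw [h]; exact mem_zmultiples _
  obtain rfl : n = 1 := by simpa using congrArg Prod.fst hn
  simpa using congrArg Prod.snd hn

theorem not_isOfFinAddOrder_one_prod (r : A) : ¬IsOfFinAddOrder ((1 : ℤ), r) := fun h =>
  not_isOfFinAddOrder_of_isAddTorsionFree one_ne_zero h.fst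

theorem index_zmultiples_one_prod (r : A) : (zmultiples ((1 : ℤ), r)).index = Nat.card A := by
  have hr := map_shearAddAut_zmultiples_one (-r) r
  rw [add_neg_cancel] at hr
  have hker :
      zmultiples ((1 : ℤ), (0 : A)) = (⊥ : AddSubgroup A).comap (AddMonoidHom.snd ℤ A) := by
    ext ⟨x, y⟩
    simp [mem_zmultiples_iff, Prod.ext_iff, eq_comm, mem_prod]
  rw [← index_map_equiv _ (shearAddAut (-r)), hr, hker,
    index_comap_of_surjective _ Prod.snd_surjective, index_bot]

theorem comap_prodMap_zmultiplesHom_zmultiples {a : ℤ} (ha : a ≠ 0) (b : A) :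
    (zmultiples (a, b)).comap ((zmultiplesHom ℤ a).prodMap (AddMonoidHom.id A)) =
      zmultiples ((1 : ℤ), b) := by
  ext ⟨x, y⟩
  simp [mem_zmultiples_iff, Prod.ext_iff, ha]

/-- For `a = 0` both sides are `0`, the index of a subgroup of infinite index being `0`. -/
theorem index_zmultiples_prod (a : ℤ) (b : A) :
    (zmultiples (a, b)).index = a.natAbs * Nat.card A := by
  -- `φ (n, y) = (n • a, y)` pulls `⟨(a, b)⟩` back to `⟨(1, b)⟩` and has range of index `|a|`.
  set φ := (zmultiplesHom ℤ a).prodMap (AddMonoidHom.id A)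
  have hle : zmultiples (a, b) ≤ φ.range := by
    rw [zmultiples_le]; exact ⟨(1, b), by simp [φ]⟩
  have hrange : φ.range.index = a.natAbs := by
    rw [AddMonoidHom.range_prodMap, range_zmultiplesHom,
      AddMonoidHom.range_eq_top_of_surjective _ Function.surjective_id, prod_top,
      index_comap_of_surjective _ Prod.fst_surjective, Int.index_zmultiples]
  rw [← relIndex_mul_index hle, hrange, mul_comm]
  rcases eq_or_ne a 0 with rfl | ha
  · simp
  · rw [← index_comap, comap_prodMap_zmultiplesHom_zmultiples ha, index_zmultiples_one_prod]

theorem map_shearAddAut_zmultiples_one_ne {c : A} (hc : c ≠ 0) (r : A) :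
    (zmultiples ((1 : ℤ), r)).map (shearAddAut c : ℤ × A →+ ℤ × A) ≠
      zmultiples ((1 : ℤ), r) := by
  rw [map_shearAddAut_zmultiples_one, Ne, zmultiples_one_injective.eq_iff]
  simpa using hc

theorem infinite_cyclic_index_card_iff [Finite A] (Z : AddSubgroup (ℤ × A)) :
    ((∃ g : ℤ × A, ¬IsOfFinAddOrder g ∧ Z = zmultiples g) ∧ Z.index = Nat.card A) ↔
      ∃ r : A, Z = zmultiples ((1 : ℤ), r) := by
  constructor
  · rintro ⟨⟨⟨a, b⟩, -, rfl⟩, hindex⟩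
    rw [index_zmultiples_prod, Nat.mul_eq_right Nat.card_pos.ne'] at hindex
    rcases Int.natAbs_eq_iff.mp hindex with rfl | rfl
    · exact ⟨b, rfl⟩
    · refine ⟨-b, ?_⟩
      rw [← zmultiples_neg, Prod.neg_mk, neg_neg]
      rfl
  · rintro ⟨r, rfl⟩
    exact ⟨⟨_, not_isOfFinAddOrder_one_prod r, rfl⟩, index_zmultiples_one_prod r⟩

end

/-- The infinite cyclic subgroups of index `d` in `C∞ × C_d = ℤ × ℤ/d` are
exactly the `d` distinct subgroups generated by `t·s^r = (1, r)`, and `Aut(ℤ × ℤ/d)` acts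
transitively on them; in particular none is characteristic when `d > 1`. -/
theorem stmt_10 (d : ℕ) (hd : 1 < d) :
    -- characterization of the infinite cyclic subgroups of index d
    (∀ Z : AddSubgroup (ℤ × ZMod d),
      ((∃ g : ℤ × ZMod d, ¬ IsOfFinAddOrder g ∧ Z = AddSubgroup.zmultiples g) ∧
        Z.index = d) ↔ ∃ r : ZMod d, Z = AddSubgroup.zmultiples ((1 : ℤ), r)) ∧
    -- they are d distinct subgroups
    (∀ r r' : ZMod d,
      AddSubgroup.zmultiples ((1 : ℤ), r) = AddSubgroup.zmultiples ((1 : ℤ), r') → r = r') ∧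
    -- Aut acts transitively on them
    (∀ r r' : ZMod d, ∃ ψ : AddAut (ℤ × ZMod d),
      AddSubgroup.map ψ.toAddMonoidHom (AddSubgroup.zmultiples ((1 : ℤ), r)) =
        AddSubgroup.zmultiples ((1 : ℤ), r')) ∧
    -- none of them is characteristic
    (∀ r : ZMod d, ∃ ψ : AddAut (ℤ × ZMod d),
      AddSubgroup.map ψ.toAddMonoidHom (AddSubgroup.zmultiples ((1 : ℤ), r)) ≠
        AddSubgroup.zmultiples ((1 : ℤ), r)) := by
  have : NeZero d := ⟨by omega⟩
  have : Fact (1 < d) := ⟨hd⟩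
  refine ⟨fun Z => by rw [← infinite_cyclic_index_card_iff, Nat.card_zmod],
    fun r r' h => zmultiples_one_injective h, fun r r' => ⟨shearAddAut (r' - r), ?_⟩,
    fun r => ⟨shearAddAut 1, map_shearAddAut_zmultiples_one_ne one_ne_zero r⟩⟩
  exact (map_shearAddAut_zmultiples_one _ _).trans (by rw [add_sub_cancel])
end
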